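/- arXiv:1411.3823 — 3 statements merged into one kernel-verified Lean document; each statement's English description precedes it below -/
import Mathlib

section
/- For a prime p and weight γ > 0, define r_{p,γ}(0) = 1 + γ/3 and, for k > 0 with base-p expansion k = κ_{a-1}p^{a-1} + ⋯ + κ_1 p + κ_0 where κ_{a-1} ≠ 0, define r_{p,γ}(k) = (γ/(2p^{2a}))(1/sin²(κ_{a-1}π/p) − 1/3). Then the infinite series ∑_{k=0}^∞ r_{p,γ}(k) converges and equals 1 + γ/2. -/
/-!
For `k ∈ [p^a, p^(a+1))` the coefficient only depends on the leading digit `κ = k / p^a`, which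
takes every value `1, …, p - 1` exactly `p^a` times. The classical identity
`∑_{κ=1}^{p-1} 1/sin²(κπ/p) = (p² - 1)/3` then makes the block sum telescope:
`∑_{p^a ≤ k < p^(a+1)} r(k) = γ/6 · (p^(-a) - p^(-(a+1)))`, hence
`∑_{k < p^N} r(k) = 1 + γ/2 - γ/(6 p^N)`. For `γ ≥ 0` the terms are nonnegative, so these partial
sums determine the sum; the general case follows because `r` is affine in `γ`.

The cosecant identity comes from the discrete Fourier transform of `g(j) = j (n - j)` on `ℤ/n`:
its second difference is `-2 + 2n·δ₀`, so `ĝ(z) (1 - z)² = 2nz` at every nontrivial `n`-th root of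
unity `z`, while `(1 - e^{2iθ})² = -4 sin²θ e^{2iθ}`.
-/

/-- The coefficients of the `p`-adic shift invariant kernel of the anchored
Sobolev space: `r p γ 0 = 1 + γ/3` and for `k ≥ 1` with `a` base-`p` digits and
most significant digit `κ`, `r p γ k = γ/(2 p^(2a)) (1/sin²(κπ/p) - 1/3)`. -/
noncomputable def rCoeff (p : ℕ) (γ : ℝ) (k : ℕ) : ℝ :=
  if k = 0 then 1 + γ / 3
  else
    γ / (2 * (p : ℝ) ^ (2 * (Nat.log p k + 1))) *
      (1 / (Real.sin ((k / p ^ Nat.log p k : ℕ) * Real.pi / p)) ^ 2 - 1 / 3)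

open Finset Filter Topology

section GeomSum

variable {R : Type*} [CommRing R]

theorem one_sub_sq_mul_sum_range_mul_pow (z : R) (m : ℕ) :
    (1 - z) ^ 2 * ∑ j ∈ range m, (j : R) * z ^ j = z - m * z ^ m + (m - 1) * z ^ (m + 1) := by
  induction m with
  | zero => simp
  | succ m ih => rw [sum_range_succ, mul_add, ih]; push_cast; ring

theorem one_sub_sq_mul_sum_range_mul_sub_mul_pow (z : R) (n : ℕ) :
    (1 - z) ^ 2 * ∑ j ∈ range n, (j : R) * (n - j) * z ^ j =
      (n - 1) * z + (n - 1) * z ^ (n + 1) - 2 * (∑ j ∈ range (n + 1), z ^ j - 1 - z) := by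
  induction n with
  | zero => simp only [range_zero, sum_empty, zero_add, range_one, sum_singleton]; ring
  | succ n ih =>
    have hsplit : ∑ j ∈ range (n + 1), (j : R) * ((n + 1 : ℕ) - j) * z ^ j =
        ∑ j ∈ range n, (j : R) * (n - j) * z ^ j + ∑ j ∈ range (n + 1), (j : R) * z ^ j := by
      rw [sum_range_succ, sum_range_succ (fun j => (j : R) * z ^ j), ← add_assoc,
        ← sum_add_distrib]
      push_cast
      congr 1
      · exact sum_congr rfl fun j _ => by ring
      · ring
    rw [hsplit, mul_add, ih, one_sub_sq_mul_sum_range_mul_pow, sum_range_succ _ (n + 1)]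
    push_cast
    ring

theorem one_sub_sq_mul_sum_range_mul_sub_mul_pow_of_geom_sum_eq_zero {z : R} {n : ℕ}
    (hz : ∑ j ∈ range n, z ^ j = 0) :
    (1 - z) ^ 2 * ∑ j ∈ range n, (j : R) * (n - j) * z ^ j = 2 * n * z := by
  have hpow : z ^ n = 1 := by rw [← sub_eq_zero, ← geom_sum_mul, hz, zero_mul]
  rw [one_sub_sq_mul_sum_range_mul_sub_mul_pow, sum_range_succ, hz, pow_succ, hpow]
  ring

theorem sum_range_mul_sub_mul_six (n : ℕ) :
    (∑ j ∈ range n, (j : R) * (n - j)) * 6 = n ^ 3 - n := by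
  have gauss (n : ℕ) : (∑ j ∈ range n, (j : R)) * 2 = n * (n - 1) := by
    induction n with
    | zero => simp
    | succ n ih => rw [sum_range_succ, add_mul, ih]; push_cast; ring
  induction n with
  | zero => simp
  | succ n ih =>
    have hsplit : ∑ j ∈ range n, (j : R) * (n + 1 - j) =
        ∑ j ∈ range n, (j : R) * (n - j) + ∑ j ∈ range n, (j : R) := by
      rw [← sum_add_distrib]
      exact sum_congr rfl fun j _ => by ring
    push_cast
    rw [sum_range_succ, hsplit]
    linear_combination ih + 3 * gauss n

end GeomSum

theorem Finset.sum_range_mul_div {M : Type*} [AddCommMonoid M] (f : ℕ → M) {b : ℕ} (hb : 0 < b)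
    (m : ℕ) : ∑ k ∈ range (b * m), f (k / b) = b • ∑ κ ∈ range m, f κ := by
  induction m with
  | zero => simp
  | succ m ih =>
    have hblock : ∀ x ∈ range b, f ((b * m + x) / b) = f m := fun x hx => by
      rw [Nat.mul_add_div hb, Nat.div_eq_of_lt (mem_range.1 hx), add_zero]
    rw [mul_add_one, sum_range_add, ih, sum_congr rfl hblock, sum_const, card_range,
      sum_range_succ, smul_add]

theorem Finset.sum_Ico_mul_div {M : Type*} [AddCommGroup M] (f : ℕ → M) {b : ℕ} (hb : 0 < b)
    {m n : ℕ} (hmn : m ≤ n) :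
    ∑ k ∈ Ico (b * m) (b * n), f (k / b) = b • ∑ κ ∈ Ico m n, f κ := by
  rw [sum_Ico_eq_sub _ (Nat.mul_le_mul_left b hmn), sum_Ico_eq_sub _ hmn, smul_sub,
    sum_range_mul_div f hb, sum_range_mul_div f hb]

open Complex in
theorem Complex.four_mul_sin_sq_mul_exp (θ : ℂ) :
    4 * sin θ ^ 2 * exp (2 * θ * I) = -(1 - exp (2 * θ * I)) ^ 2 := by
  have h2 : exp (2 * θ * I) = exp (θ * I) ^ 2 := by rw [sq, ← exp_add]; ring_nf
  have hinv : exp (-θ * I) * exp (θ * I) = 1 := by rw [← exp_add]; simp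
  rw [sin, h2]
  set u := exp (θ * I)
  set v := exp (-θ * I)
  linear_combination (2 * u ^ 2 - v * u - 1) * hinv + (v - u) ^ 2 * u ^ 2 * I_sq

open Complex in
theorem Complex.one_div_sin_sq_eq_sum {n κ : ℕ} (hn : n ≠ 0) (hκ : ¬ n ∣ κ) :
    1 / sin (κ * Real.pi / n) ^ 2 =
      -(2 / n) * ∑ j ∈ range n, (j : ℂ) * (n - j) * (exp (2 * Real.pi * I / n) ^ κ) ^ j := by
  have hsin := four_mul_sin_sq_mul_exp (κ * Real.pi / n)
  rw [show 2 * ((κ : ℂ) * Real.pi / n) * I = κ * (2 * Real.pi * I / n) by ring,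
    exp_nat_mul] at hsin
  set ζ := exp (2 * Real.pi * I / n)
  have hζ : IsPrimitiveRoot ζ n := isPrimitiveRoot_exp n hn
  have hz0 : ζ ^ κ ≠ 0 := pow_ne_zero _ (exp_ne_zero _)
  have hz1 : ζ ^ κ ≠ 1 := mt (hζ.pow_eq_one_iff_dvd κ).1 hκ
  have hgeom : ∑ j ∈ range n, (ζ ^ κ) ^ j = 0 := by
    rw [geom_sum_eq hz1, ← pow_mul, mul_comm, pow_mul, hζ.pow_eq_one, one_pow, sub_self,
      zero_div]
  have hG := one_sub_sq_mul_sum_range_mul_sub_mul_pow_of_geom_sum_eq_zero hgeom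
  set G := ∑ j ∈ range n, (j : ℂ) * (n - j) * (ζ ^ κ) ^ j
  set s := sin (κ * Real.pi / n)
  have hn' : (n : ℂ) ≠ 0 := Nat.cast_ne_zero.2 hn
  have key : s ^ 2 * G = -(n / 2) := by
    refine mul_left_cancel₀ (mul_ne_zero (by norm_num : (4 : ℂ) ≠ 0) hz0) ?_
    linear_combination G * hsin - hG
  have hs : s ≠ 0 := by
    rintro h
    rw [h] at key
    exact hn' (by linear_combination 2 * key)
  field_simp
  linear_combination 2 * key

open Complex in
theorem Real.sum_Ico_one_div_sin_sq {n : ℕ} (hn : n ≠ 0) :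
    ∑ κ ∈ Ico 1 n, 1 / Real.sin (κ * Real.pi / n) ^ 2 = ((n : ℝ) ^ 2 - 1) / 3 := by
  set ζ := Complex.exp (2 * Real.pi * I / n)
  have hζ : IsPrimitiveRoot ζ n := isPrimitiveRoot_exp n hn
  have hinner : ∀ j ∈ range n,
      ∑ κ ∈ Ico 1 n, (j : ℂ) * (n - j) * (ζ ^ κ) ^ j = -((j : ℂ) * (n - j)) := by
    intro j hj
    obtain rfl | hj0 := Nat.eq_zero_or_pos j
    · simp
    have hgeom : ∑ κ ∈ range n, (ζ ^ j) ^ κ = 0 := by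
      rw [geom_sum_eq (hζ.pow_ne_one_of_pos_of_lt hj0.ne' (mem_range.1 hj)), ← pow_mul,
        mul_comm, pow_mul, hζ.pow_eq_one, one_pow, sub_self, zero_div]
    rw [range_eq_Ico, sum_eq_sum_Ico_succ_bot (by omega)] at hgeom
    simp_rw [← pow_mul, mul_comm _ j, pow_mul, ← mul_sum]
    linear_combination (j : ℂ) * (n - j) * hgeom
  apply Complex.ofReal_injective
  simp only [ofReal_sum, ofReal_div, ofReal_one, ofReal_pow, ofReal_sin, ofReal_mul,
    ofReal_natCast, ofReal_sub]
  rw [sum_congr rfl fun κ hκ => one_div_sin_sq_eq_sum hn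
    (Nat.not_dvd_of_pos_of_lt (mem_Ico.1 hκ).1 (mem_Ico.1 hκ).2), ← mul_sum, sum_comm,
    sum_congr rfl hinner, sum_neg_distrib]
  have hn' : (n : ℂ) ≠ 0 := Nat.cast_ne_zero.2 hn
  field_simp
  push_cast
  linear_combination sum_range_mul_sub_mul_six (R := ℂ) n

theorem Real.one_le_one_div_sin_sq {κ n : ℕ} (hκ : 0 < κ) (hκn : κ < n) :
    1 ≤ 1 / Real.sin (κ * Real.pi / n) ^ 2 := by
  have hn : (0 : ℝ) < n := by exact_mod_cast hκ.trans hκn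
  have hpos : 0 < Real.sin (κ * Real.pi / n) := by
    apply Real.sin_pos_of_pos_of_lt_pi (by positivity)
    rw [div_lt_iff₀ hn]
    nlinarith [Real.pi_pos, (by exact_mod_cast hκn : (κ : ℝ) < n)]
  exact one_le_one_div (by positivity) (Real.sin_sq_le_one _)

theorem hasSum_of_nonneg_of_tendsto_sum_range_comp {f : ℕ → ℝ} (hf : ∀ k, 0 ≤ f k)
    {φ : ℕ → ℕ} (hφ : Tendsto φ atTop atTop) {a : ℝ}
    (h : Tendsto (fun N ↦ ∑ k ∈ range (φ N), f k) atTop (𝓝 a)) : HasSum f a := by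
  rw [hasSum_iff_tendsto_nat_of_nonneg hf]
  have hmono : Monotone fun n ↦ ∑ k ∈ range n, f k := fun m n hmn =>
    sum_le_sum_of_subset_of_nonneg (range_subset_range.2 hmn) fun k _ _ => hf k
  rcases tendsto_atTop_of_monotone hmono with htop | ⟨l, hl⟩
  · exact absurd (htop.comp hφ) (not_tendsto_atTop_of_tendsto_nhds h)
  · rwa [tendsto_nhds_unique (hl.comp hφ) h] at hl

section rCoeff

variable {p : ℕ} (γ : ℝ)

theorem rCoeff_of_mem_Ico (hp : 0 < p) {a k : ℕ} (hk : k ∈ Ico (p ^ a) (p ^ (a + 1))) :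
    rCoeff p γ k = γ / (2 * (p : ℝ) ^ (2 * (a + 1))) *
      (1 / Real.sin ((k / p ^ a : ℕ) * Real.pi / p) ^ 2 - 1 / 3) := by
  obtain ⟨hk1, hk2⟩ := mem_Ico.1 hk
  have hk0 : k ≠ 0 := ((pow_pos hp a).trans_le hk1).ne'
  rw [rCoeff, if_neg hk0, Nat.log_eq_of_pow_le_of_lt_pow hk1 hk2]

theorem sum_Ico_rCoeff (hp : 2 ≤ p) (a : ℕ) :
    ∑ k ∈ Ico (p ^ a) (p ^ (a + 1)), rCoeff p γ k =
      γ / 6 * (((p : ℝ) ^ a)⁻¹ - ((p : ℝ) ^ (a + 1))⁻¹) := by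
  have hpa : 0 < p ^ a := pow_pos (by omega) a
  rw [sum_congr rfl fun k hk => rCoeff_of_mem_Ico γ (by omega) hk]
  have hsum := sum_Ico_mul_div (fun κ : ℕ => γ / (2 * (p : ℝ) ^ (2 * (a + 1))) *
    (1 / Real.sin (κ * Real.pi / p) ^ 2 - 1 / 3)) hpa (by omega : 1 ≤ p)
  rw [mul_one, ← pow_succ] at hsum
  rw [hsum, ← mul_sum, sum_sub_distrib, Real.sum_Ico_one_div_sin_sq (by omega), sum_const,
    Nat.card_Ico, nsmul_eq_mul, nsmul_eq_mul, Nat.cast_sub (by omega)]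
  have hp0 : (p : ℝ) ≠ 0 := by norm_cast; omega
  push_cast
  field_simp
  ring

theorem sum_range_pow_rCoeff (hp : 2 ≤ p) (N : ℕ) :
    ∑ k ∈ range (p ^ N), rCoeff p γ k = 1 + γ / 2 - γ / 6 * ((p : ℝ) ^ N)⁻¹ := by
  induction N with
  | zero => simp only [pow_zero, range_one, sum_singleton, rCoeff, if_pos, inv_one]; ring
  | succ N ih =>
    rw [← sum_range_add_sum_Ico _ (Nat.pow_le_pow_right (by omega) N.le_succ), ih,
      sum_Ico_rCoeff γ hp]
    ring

variable {γ}

theorem rCoeff_nonneg (hp : 2 ≤ p) (hγ : 0 ≤ γ) (k : ℕ) : 0 ≤ rCoeff p γ k := by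
  obtain rfl | hk := Nat.eq_zero_or_pos k
  · simp only [rCoeff, if_pos]
    positivity
  have hpk : 0 < p ^ Nat.log p k := pow_pos (by omega) _
  have hκ : 0 < k / p ^ Nat.log p k :=
    Nat.div_pos (Nat.pow_log_le_self p hk.ne') hpk
  have hκp : k / p ^ Nat.log p k < p := by
    rw [Nat.div_lt_iff_lt_mul hpk, ← pow_succ']
    exact Nat.lt_pow_succ_log_self (by omega) k
  rw [rCoeff, if_neg hk.ne']
  have := Real.one_le_one_div_sin_sq hκ hκp
  exact mul_nonneg (by positivity) (by linarith)

theorem hasSum_rCoeff_of_nonneg (hp : 2 ≤ p) (hγ : 0 ≤ γ) :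
    HasSum (rCoeff p γ) (1 + γ / 2) := by
  refine hasSum_of_nonneg_of_tendsto_sum_range_comp (rCoeff_nonneg hp hγ)
    (tendsto_pow_atTop_atTop_of_one_lt (by omega : 1 < p)) ?_
  simp_rw [sum_range_pow_rCoeff γ hp]
  have hpow : Tendsto (fun N : ℕ ↦ (p : ℝ) ^ N) atTop atTop :=
    tendsto_pow_atTop_atTop_of_one_lt (by exact_mod_cast hp)
  simpa using (tendsto_inv_atTop_zero.comp hpow).const_mul (γ / 6) |>.const_sub (1 + γ / 2)

theorem rCoeff_eq_add (k : ℕ) :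
    rCoeff p γ k = (1 - γ) * (if k = 0 then 1 else 0) + γ * rCoeff p 1 k := by
  unfold rCoeff
  split_ifs <;> ring

end rCoeff

theorem tsum_rCoeff_general (p : ℕ) (hp : p.Prime) (γ : ℝ) :
    HasSum (rCoeff p γ) (1 + γ / 2) := by
  have h := ((hasSum_ite_eq 0 (1 : ℝ)).mul_left (1 - γ)).add
    ((hasSum_rCoeff_of_nonneg hp.two_le zero_le_one).mul_left γ)
  rw [show (1 - γ) * 1 + γ * (1 + 1 / 2) = 1 + γ / 2 by ring] at h
  exact funext rCoeff_eq_add ▸ h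

theorem tsum_rCoeff (p : ℕ) (hp : p.Prime) (γ : ℝ) (hγ : 0 < γ) :
    HasSum (rCoeff p γ) (1 + γ / 2) :=
  tsum_rCoeff_general p hp γ
end

section
/- For a prime p and a digit κ with 1 ≤ κ ≤ p − 1, one has ∑_{u=0}^{p-2} ∑_{v=u+1}^{p-1} (v − u) e^{2πi κ(v−u)/p} = −p/(2 sin²(κπ/p)). -/
/-!
Grouping the pairs by `d = v - u`, each `d` occurs `p - d` times, so the sum is
`∑_{d<p} (p - d) d z^d` with `z = e(κ/p)`, a `p`-th root of unity other than `1`. Summing by parts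
twice against the vanishing geometric sum `∑_{d<p} z^d` gives `2pz/(z - 1)²`, and
`(z - 1)² = -4 sin²(κπ/p) z`.
-/

open Finset Complex

theorem sub_one_mul_sum_range_mul_pow {R : Type*} [CommRing R] (f : ℕ → R) (z : R) (n : ℕ) :
    (z - 1) * ∑ d ∈ range n, f d * z ^ d
      = f n * z ^ n - f 0 - z * ∑ d ∈ range n, (f (d + 1) - f d) * z ^ d := by
  induction n with
  | zero => simp
  | succ n ih =>
    simp only [sum_range_succ, mul_add, ih]
    ring

section RootOfUnity

variable {K : Type*} [Field K] {z : K} {n : ℕ}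

theorem geom_sum_eq_zero_of_pow_eq_one (hz : z ^ n = 1) (hz1 : z ≠ 1) :
    ∑ d ∈ range n, z ^ d = 0 := by
  rw [geom_sum_eq hz1, hz, sub_self, zero_div]

theorem sub_one_mul_sum_range_natCast_mul_pow_of_pow_eq_one (hz : z ^ n = 1) (hz1 : z ≠ 1) :
    (z - 1) * ∑ d ∈ range n, (d : K) * z ^ d = n := by
  rw [sub_one_mul_sum_range_mul_pow]
  simp [geom_sum_eq_zero_of_pow_eq_one hz hz1, hz]

theorem sum_range_sub_mul_mul_pow_of_pow_eq_one (hz : z ^ n = 1) (hz1 : z ≠ 1) :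
    ∑ d ∈ range n, ((n : K) - d) * d * z ^ d = 2 * n * z / (z - 1) ^ 2 := by
  have hΔ : ∀ d ∈ range n, (((n : K) - (d + 1 : ℕ)) * (d + 1 : ℕ) - ((n : K) - d) * d) * z ^ d
      = (n - 1) * z ^ d - 2 * (d * z ^ d) := by
    intro d _; push_cast; ring
  have hS : (z - 1) * ∑ d ∈ range n, ((n : K) - d) * d * z ^ d
      = 2 * z * ∑ d ∈ range n, (d : K) * z ^ d := by
    rw [sub_one_mul_sum_range_mul_pow (fun d => ((n : K) - d) * d), sum_congr rfl hΔ,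
      sum_sub_distrib, ← mul_sum, ← mul_sum, geom_sum_eq_zero_of_pow_eq_one hz hz1]
    simp only [sub_self, Nat.cast_zero]
    ring
  rw [eq_div_iff (pow_ne_zero 2 (sub_ne_zero.mpr hz1))]
  linear_combination
    (z - 1) * hS + 2 * z * sub_one_mul_sum_range_natCast_mul_pow_of_pow_eq_one hz hz1

end RootOfUnity

theorem sum_range_sum_Icc_sub {M : Type*} [AddCommMonoid M] (n : ℕ) (F : ℕ → M) (hF0 : F 0 = 0) :
    ∑ u ∈ range (n - 1), ∑ v ∈ Icc (u + 1) (n - 1), F (v - u)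
      = ∑ d ∈ range n, (n - d) • F d := by
  have hinner : ∀ u ∈ range (n - 1),
      ∑ v ∈ Icc (u + 1) (n - 1), F (v - u) = ∑ d ∈ Icc 1 (n - 1 - u), F d := by
    intro u hu
    rw [mem_range] at hu
    rw [show Icc (u + 1) (n - 1) = (Icc 1 (n - 1 - u)).map (addLeftEmbedding u) by
      rw [map_add_left_Icc]; congr 1; omega, sum_map]
    simp
  have hswap : ∑ u ∈ range (n - 1), ∑ d ∈ Icc 1 (n - 1 - u), F d
      = ∑ d ∈ Icc 1 (n - 1), ∑ _u ∈ range (n - d), F d :=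
    sum_comm' fun u d => by simp only [mem_range, mem_Icc]; omega
  rw [sum_congr rfl hinner, hswap]
  simp only [sum_const, card_range]
  refine sum_subset (fun d hd => by simp only [mem_range, mem_Icc] at hd ⊢; omega) ?_
  intro d hd hnd
  simp only [mem_range, mem_Icc] at hd hnd
  obtain rfl : d = 0 := by omega
  rw [hF0, smul_zero]

theorem Complex.exp_two_mul_I_sub_one_sq (θ : ℂ) :
    (exp (2 * θ * I) - 1) ^ 2 = -4 * sin θ ^ 2 * exp (2 * θ * I) := by
  have h2 : exp (2 * θ * I) = exp (θ * I) ^ 2 := by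
    rw [← exp_nat_mul]; push_cast; ring_nf
  have hneg : exp (-θ * I) = (exp (θ * I))⁻¹ := by
    rw [← exp_neg]; ring_nf
  rw [sin, hneg, h2]
  field_simp
  ring_nf
  rw [I_sq]
  ring

theorem sum_weighted_char_upper_general (p : ℕ) (κ : ℕ) (hκ1 : 1 ≤ κ) (hκ2 : κ ≤ p - 1) :
    ∑ u ∈ Finset.range (p - 1), ∑ v ∈ Finset.Icc (u + 1) (p - 1),
        ((v : ℂ) - (u : ℂ)) * Complex.exp (2 * Real.pi * Complex.I * κ * ((v : ℂ) - u) / p)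
      = -(p : ℂ) / (2 * (Real.sin (κ * Real.pi / p)) ^ 2) := by
  set ζ : ℂ := exp (2 * Real.pi * I / p)
  have hζ : IsPrimitiveRoot ζ p := isPrimitiveRoot_exp p (by omega)
  have hzp : (ζ ^ κ) ^ p = 1 := by rw [pow_right_comm, hζ.pow_eq_one, one_pow]
  have hz1 : ζ ^ κ ≠ 1 := fun h => by
    have := Nat.eq_zero_of_dvd_of_lt (hζ.pow_eq_one_iff_dvd κ |>.mp h) (by omega)
    omega
  have hζpow (m : ℕ) : ζ ^ m = exp (2 * Real.pi * I * m / p) := by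
    rw [← exp_nat_mul]; ring_nf
  have hterm (u v : ℕ) (h : u ≤ v) :
      ((v : ℂ) - u) * exp (2 * Real.pi * I * κ * ((v : ℂ) - u) / p)
        = ((v - u : ℕ) : ℂ) * (ζ ^ κ) ^ (v - u) := by
    rw [← pow_mul, hζpow, Nat.cast_mul, Nat.cast_sub h]; ring_nf
  calc _ = ∑ u ∈ range (p - 1), ∑ v ∈ Icc (u + 1) (p - 1),
          ((v - u : ℕ) : ℂ) * (ζ ^ κ) ^ (v - u) :=
        sum_congr rfl fun u _ => sum_congr rfl fun v hv => hterm u v (by rw [mem_Icc] at hv; omega)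
    _ = ∑ d ∈ range p, ((p : ℂ) - d) * d * (ζ ^ κ) ^ d := by
        rw [sum_range_sum_Icc_sub p (fun d => (d : ℂ) * (ζ ^ κ) ^ d) (by simp)]
        refine sum_congr rfl fun d hd => ?_
        rw [nsmul_eq_mul, Nat.cast_sub (mem_range.mp hd).le, mul_assoc]
    _ = 2 * p * ζ ^ κ / (ζ ^ κ - 1) ^ 2 := sum_range_sub_mul_mul_pow_of_pow_eq_one hzp hz1
    _ = _ := by
        have hθ : ζ ^ κ = exp (2 * (κ * Real.pi / p) * I) := by rw [hζpow]; ring_nf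
        rw [hθ, exp_two_mul_I_sub_one_sq, mul_div_mul_right _ _ (exp_ne_zero _)]
        push_cast
        ring

theorem sum_weighted_char_upper (p : ℕ) (hp : p.Prime) (κ : ℕ) (hκ1 : 1 ≤ κ) (hκ2 : κ ≤ p - 1) :
    ∑ u ∈ Finset.range (p - 1), ∑ v ∈ Finset.Icc (u + 1) (p - 1),
        ((v : ℂ) - (u : ℂ)) * Complex.exp (2 * Real.pi * Complex.I * κ * ((v : ℂ) - u) / p)
      = -(p : ℂ) / (2 * (Real.sin (κ * Real.pi / p)) ^ 2) :=
  sum_weighted_char_upper_general p κ hκ1 hκ2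
end

section
/- (Hickernell–Niederreiter bound) If (c_j)_{j≥1} is a sequence of positive reals with ∑_{j=1}^∞ c_j < ∞, then for every δ > 0 there exists a constant C_δ > 0 such that for all integers N ≥ 2, ∏_{j=1}^∞ (1 + c_j log N) ≤ C_δ N^δ. -/
theorem hickernell_niederreiter_bound (c : ℕ → ℝ) (hc : ∀ j, 0 < c j)
    (hsum : Summable c) :
    ∀ δ : ℝ, 0 < δ → ∃ C : ℝ, 0 < C ∧ ∀ N : ℕ, 2 ≤ N →
      (∏' j, (1 + c j * Real.log N)) ≤ C * (N : ℝ) ^ δ := by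
  intro δ hδ
  -- choose J with tail sum < δ/2
  obtain ⟨J, hJ⟩ : ∃ J : ℕ, (∑' k, c (k + J)) < δ / 2 := by
    have h := tendsto_sum_nat_add c
    have := (h.eventually (eventually_lt_nhds (show (0:ℝ) < δ / 2 by linarith))).exists
    exact this
  set ε : ℝ := δ / (2 * (J + 1)) with hε_def
  have hεpos : 0 < ε := by positivity
  set C : ℝ := Real.exp (∑ j ∈ Finset.range J, Real.log (1 + c j / ε)) with hC_def
  refine ⟨C, Real.exp_pos _, fun N hN => ?_⟩
  have hN1 : (1:ℝ) < N := by exact_mod_cast Nat.lt_of_lt_of_le one_lt_two hN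
  have hN0 : (0:ℝ) < N := lt_trans one_pos hN1
  set L : ℝ := Real.log N with hL_def
  have hL : 0 < L := Real.log_pos hN1
  set g : ℕ → ℝ := fun j => Real.log (1 + c j * L) with hg_def
  have hfpos : ∀ j, (0:ℝ) < 1 + c j * L := fun j => by
    have := (hc j).le
    nlinarith [hL.le, mul_nonneg this hL.le]
  have hg_nonneg : ∀ j, 0 ≤ g j := fun j =>
    Real.log_nonneg (by nlinarith [mul_nonneg (hc j).le hL.le])
  have hg_le : ∀ j, g j ≤ c j * L := fun j => by
    have := Real.log_le_sub_one_of_pos (hfpos j)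
    simpa using this
  have hg_sum : Summable g :=
    Summable.of_nonneg_of_le hg_nonneg hg_le (hsum.mul_right L)
  -- the product equals exp of the sum of logs
  have hprod : (∏' j, (1 + c j * Real.log N)) = Real.exp (∑' j, g j) := by
    have hp : HasProd (fun j => 1 + c j * L) (Real.exp (∑' j, g j)) := by
      have := hg_sum.hasSum.rexp
      refine this.congr_fun fun j => ?_
      simp [Function.comp, hg_def, Real.exp_log (hfpos j)]
    rw [← hL_def]
    exact hp.tprod_eq
  rw [hprod]
  -- split the sum
  have hsplit : (∑' j, g j) = (∑ j ∈ Finset.range J, g j) + ∑' k, g (k + J) :=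
    (Summable.sum_add_tsum_nat_add J hg_sum).symm
  -- tail bound
  have htail : (∑' k, g (k + J)) ≤ δ / 2 * L := by
    have h1 : (∑' k, g (k + J)) ≤ ∑' k, c (k + J) * L :=
      Summable.tsum_le_tsum (fun k => hg_le (k + J))
        ((summable_nat_add_iff J).2 hg_sum) (((summable_nat_add_iff J).2 hsum).mul_right L)
    have h2 : (∑' k, c (k + J) * L) = (∑' k, c (k + J)) * L := tsum_mul_right
    calc (∑' k, g (k + J)) ≤ (∑' k, c (k + J)) * L := by rw [← h2]; exact h1
      _ ≤ δ / 2 * L := by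
        apply mul_le_mul_of_nonneg_right hJ.le hL.le
  -- head bound: log N ≤ N^ε / ε
  have hLle : L ≤ (N:ℝ) ^ ε / ε := by
    have h1 : Real.log ((N:ℝ) ^ ε) ≤ (N:ℝ) ^ ε - 1 :=
      Real.log_le_sub_one_of_pos (Real.rpow_pos_of_pos hN0 ε)
    rw [Real.log_rpow hN0] at h1
    rw [le_div_iff₀ hεpos, mul_comm]
    nlinarith
  have hrpow1 : (1:ℝ) ≤ (N:ℝ) ^ ε := Real.one_le_rpow hN1.le hεpos.le
  have hhead : ∀ j, g j ≤ Real.log (1 + c j / ε) + ε * L := by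
    intro j
    have hb : 1 + c j * L ≤ (1 + c j / ε) * (N:ℝ) ^ ε := by
      have h1 : c j * L ≤ c j / ε * (N:ℝ) ^ ε := by
        rw [div_mul_eq_mul_div, le_div_iff₀ hεpos]
        calc c j * L * ε ≤ c j * ((N:ℝ) ^ ε / ε) * ε :=
              mul_le_mul_of_nonneg_right
                (mul_le_mul_of_nonneg_left hLle (hc j).le) hεpos.le
          _ = c j * (N:ℝ) ^ ε := by field_simp
      nlinarith
    calc g j ≤ Real.log ((1 + c j / ε) * (N:ℝ) ^ ε) :=
          Real.log_le_log (hfpos j) hb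
      _ = Real.log (1 + c j / ε) + Real.log ((N:ℝ) ^ ε) := by
          have h0 : (0:ℝ) < 1 + c j / ε := by have := hc j; positivity
          rw [Real.log_mul (ne_of_gt h0) (by positivity)]
      _ = Real.log (1 + c j / ε) + ε * L := by rw [Real.log_rpow hN0]
  have hheadsum : (∑ j ∈ Finset.range J, g j)
      ≤ (∑ j ∈ Finset.range J, Real.log (1 + c j / ε)) + δ / 2 * L := by
    calc (∑ j ∈ Finset.range J, g j)
        ≤ ∑ j ∈ Finset.range J, (Real.log (1 + c j / ε) + ε * L) :=
          Finset.sum_le_sum fun j _ => hhead j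
      _ = (∑ j ∈ Finset.range J, Real.log (1 + c j / ε)) + J * (ε * L) := by
          rw [Finset.sum_add_distrib, Finset.sum_const, Finset.card_range, nsmul_eq_mul]
      _ ≤ (∑ j ∈ Finset.range J, Real.log (1 + c j / ε)) + δ / 2 * L := by
          have : (J:ℝ) * ε ≤ δ / 2 := by
            rw [hε_def]
            rw [mul_div_assoc', div_le_div_iff₀ (by positivity) two_pos]
            have : (J:ℝ) ≤ J + 1 := by linarith
            nlinarith
          nlinarith [hL.le]
  -- combine
  have htotal : (∑' j, g j)
      ≤ (∑ j ∈ Finset.range J, Real.log (1 + c j / ε)) + δ * L := by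
    rw [hsplit]; linarith
  calc Real.exp (∑' j, g j)
      ≤ Real.exp ((∑ j ∈ Finset.range J, Real.log (1 + c j / ε)) + δ * L) :=
        Real.exp_le_exp.2 htotal
    _ = C * Real.exp (δ * L) := by rw [Real.exp_add, hC_def]
    _ = C * (N:ℝ) ^ δ := by
        rw [Real.rpow_def_of_pos hN0, hL_def, mul_comm δ]
end
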